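/- Let A ⊆ ℕ (positive naturals, star-free elements) and B be a σ-set whose elements all admit anti-elements, with A and B disjoint from each other's star-images. Then the generated meta-space ⟨2^(A⊕B), 2^(A⊕B⁻)⟩ = {X ⊕ Y : X ⊆ A ⊕ B, Y ⊆ A ⊕ B⁻} has cardinality 2^|A| · 3^|B|. -/
import Mathlib


variable {α : Type*} [DecidableEq α]

/-- The *-intersection: `A ∗∩ B = {x ∈ A : star x ∈ B}`. -/
def sInter (star : α → α) (A B : Finset α) : Finset α :=
  A.filter (fun x => star x ∈ B)

/-- The *-difference: `A ∗ B = A \ (A ∗∩ B)`. -/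
def sDiff (star : α → α) (A B : Finset α) : Finset α :=
  A \ sInter star A B

/-- The fusion: `A ⊕ B = (A ∗ B) ∪ (B ∗ A)`. -/
def fusion (star : α → α) (A B : Finset α) : Finset α :=
  sDiff star A B ∪ sDiff star B A

/-- A σ-set: never contains an element together with its anti-element. -/
def IsSigmaSet (star : α → α) (A : Finset α) : Prop :=
  ∀ x ∈ A, star x ∉ A

/-- The generated space `⟨2^A, 2^B⟩ = {X ⊕ Y : X ⊆ A, Y ⊆ B}`. -/
def genSpace (star : α → α) (A B : Finset α) : Finset (Finset α) :=
  (A.powerset ×ˢ B.powerset).image (fun p => fusion star p.1 p.2)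

open Finset

lemma mem_fusion' {star : α → α} {X Y : Finset α} {z : α} :
    z ∈ fusion star X Y ↔ (z ∈ X ∧ star z ∉ Y) ∨ (z ∈ Y ∧ star z ∉ X) := by
  simp only [fusion, sDiff, sInter, mem_union, mem_sdiff, mem_filter]
  tauto

lemma mem_image_star' {star : α → α} (hinv : Function.Involutive star) {B : Finset α} {x : α} :
    x ∈ B.image star ↔ star x ∈ B := by
  constructor
  · rintro h; obtain ⟨b, hb, rfl⟩ := Finset.mem_image.mp h; rwa [hinv]
  · intro h; exact Finset.mem_image.mpr ⟨star x, h, hinv x⟩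

lemma fusion_eq_union {star : α → α} {X Y : Finset α}
    (h1 : ∀ x ∈ X, star x ∉ Y) (h2 : ∀ y ∈ Y, star y ∉ X) :
    fusion star X Y = X ∪ Y := by
  ext z
  rw [mem_fusion', Finset.mem_union]
  constructor
  · tauto
  · rintro (h | h)
    · exact Or.inl ⟨h, h1 z h⟩
    · exact Or.inr ⟨h, h2 z h⟩

lemma card_disjoint_pairs (B : Finset α) :
    ((B.powerset ×ˢ B.powerset).filter fun p => Disjoint p.1 p.2).card = 3 ^ B.card := by
  have h : ((B.powerset ×ˢ B.powerset).filter fun p => Disjoint p.1 p.2)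
      = B.powerset.biUnion (fun C => ((B \ C).powerset).image (fun D => (C, D))) := by
    ext ⟨C, D⟩
    simp only [mem_filter, mem_product, mem_powerset, mem_biUnion, mem_image,
      Prod.mk.injEq, subset_sdiff]
    constructor
    · rintro ⟨⟨hC, hD⟩, hd⟩
      exact ⟨C, hC, D, ⟨hD, hd.symm⟩, rfl, rfl⟩
    · rintro ⟨C', hC', D', ⟨hD', hd⟩, rfl, rfl⟩
      exact ⟨⟨hC', hD'⟩, hd.symm⟩
  rw [h, card_biUnion]
  · have : ∀ C ∈ B.powerset, (((B \ C).powerset).image (fun D => (C, D))).card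
        = 2 ^ (B.card - C.card) := by
      intro C hC
      rw [card_image_of_injective _ (fun x y h => by simpa using h), card_powerset,
        card_sdiff_of_subset (mem_powerset.mp hC)]
    rw [Finset.sum_congr rfl this, sum_powerset_apply_card (fun k => 2 ^ (B.card - k))]
    have := add_pow 1 2 B.card
    simp only [one_pow, one_mul, nsmul_eq_mul] at this ⊢
    rw [show (3:ℕ) = 1 + 2 by norm_num, this]
    exact (Finset.sum_congr rfl fun k hk => by ring).symm
  · intro x hx y hy hxy
    simp only [disjoint_left, mem_image]
    rintro ⟨C, D⟩ ⟨D1, _, h1⟩ ⟨D2, _, h2⟩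
    exact hxy (((Prod.mk.injEq .. |>.mp h1).1).trans ((Prod.mk.injEq .. |>.mp h2).1).symm)

theorem stmt_19 (star : α → α) (hinv : Function.Involutive star)
    (hne : ∀ x, star x ≠ x)
    (A B : Finset α)
    (hAneutral : ∀ x ∈ A, star x ∉ A ∪ B ∪ B.image star)
    (hB : IsSigmaSet star B) (hdisj : Disjoint A B) :
    (genSpace star (fusion star A B) (fusion star A (B.image star))).card =
      2 ^ A.card * 3 ^ B.card := by
  classical
  set Bs := B.image star with hBsdef
  have hAs : ∀ x ∈ A, star x ∉ A ∧ star x ∉ B ∧ star x ∉ Bs := by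
    intro x hx
    have := hAneutral x hx
    simp only [Finset.mem_union, not_or] at this
    exact ⟨this.1.1, this.1.2, this.2⟩
  have hBA : ∀ b ∈ B, star b ∉ A := by
    intro b hb h
    have := (hAs _ h).2.1
    rw [hinv] at this; exact this hb
  have hABs : ∀ x ∈ A, x ∉ Bs := fun x hx h =>
    (hAs x hx).2.1 ((mem_image_star' hinv).mp h)
  have hBBs : ∀ b ∈ B, b ∉ Bs := fun b hb h =>
    hB b hb ((mem_image_star' hinv).mp h)
  have hS : fusion star A B = A ∪ B :=
    fusion_eq_union (fun x hx => (hAs x hx).2.1) hBA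
  have hT : fusion star A Bs = A ∪ Bs :=
    fusion_eq_union (fun x hx => (hAs x hx).2.2)
      (fun y hy => Finset.disjoint_right.mp hdisj ((mem_image_star' hinv).mp hy))
  rw [hS, hT]
  set Dom := A.powerset ×ˢ ((B.powerset ×ˢ B.powerset).filter fun p => Disjoint p.1 p.2)
    with hDomdef
  set f : Finset α × Finset α × Finset α → Finset α :=
    fun q => q.1 ∪ q.2.1 ∪ (q.2.2).image star with hfdef
  have hmemDom : ∀ P C D : Finset α,
      (P, C, D) ∈ Dom ↔ P ⊆ A ∧ C ⊆ B ∧ D ⊆ B ∧ Disjoint C D := by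
    intro P C D
    simp only [hDomdef, mem_product, mem_filter, mem_powerset]
    tauto
  -- recovery lemma
  have recover : ∀ P C D : Finset α, P ⊆ A → C ⊆ B → D ⊆ B →
      (P ∪ C ∪ D.image star) ∩ A = P ∧ (P ∪ C ∪ D.image star) ∩ B = C ∧
      (P ∪ C ∪ D.image star) ∩ Bs = D.image star := by
    intro P C D hP hC hD
    have hDs : D.image star ⊆ Bs := Finset.image_subset_image hD
    refine ⟨?_, ?_, ?_⟩ <;> ext z <;>
      simp only [mem_inter, mem_union] <;> constructor
    · rintro ⟨(h | h) | h, hA⟩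
      · exact h
      · exact absurd (hC h) (Finset.disjoint_left.mp hdisj hA)
      · exact absurd (hDs h) (hABs z hA)
    · intro h; exact ⟨Or.inl (Or.inl h), hP h⟩
    · rintro ⟨(h | h) | h, hBmem⟩
      · exact absurd hBmem (Finset.disjoint_left.mp hdisj (hP h))
      · exact h
      · exact absurd (hDs h) (hBBs z hBmem)
    · intro h; exact ⟨Or.inl (Or.inr h), hC h⟩
    · rintro ⟨(h | h) | h, hBsmem⟩
      · exact absurd hBsmem (hABs z (hP h))
      · exact absurd hBsmem (hBBs z (hC h))
      · exact h
    · intro h; exact ⟨Or.inr h, hDs h⟩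
  have key : genSpace star (A ∪ B) (A ∪ Bs) = Dom.image f := by
    ext Z
    simp only [genSpace, Finset.mem_image, Finset.mem_product, Finset.mem_powerset,
      Prod.exists]
    constructor
    · rintro ⟨X, Y, ⟨hX, hY⟩, rfl⟩
      refine ⟨(X ∪ Y) ∩ A, B.filter (fun b => b ∈ X ∧ star b ∉ Y),
        B.filter (fun b => star b ∈ Y ∧ b ∉ X), (hmemDom _ _ _).mpr
          ⟨inter_subset_right, filter_subset _ _, filter_subset _ _, ?_⟩, ?_⟩
      · rw [Finset.disjoint_left]
        intro b hb hb'
        exact (mem_filter.mp hb').2.2 (mem_filter.mp hb).2.1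
      · ext z
        have h1 : z ∈ X → z ∈ A ∨ z ∈ B := fun h => mem_union.mp (hX h)
        have h2 : z ∈ Y → z ∈ A ∨ star z ∈ B := fun h =>
          (mem_union.mp (hY h)).imp id ((mem_image_star' hinv).mp)
        have h3 : z ∈ A → star z ∉ X := by
          intro hz h
          rcases mem_union.mp (hX h) with h' | h'
          · exact (hAs z hz).1 h'
          · exact (hAs z hz).2.1 h'
        have h4 : z ∈ A → star z ∉ Y := by
          intro hz h
          rcases mem_union.mp (hY h) with h' | h'
          · exact (hAs z hz).1 h'
          · exact (hAs z hz).2.2 h'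
        rw [mem_fusion']
        simp only [hfdef, mem_union]
        rw [iff_comm]
        constructor
        · rintro (⟨hzX, hsY⟩ | ⟨hzY, hsX⟩)
          · rcases h1 hzX with hA' | hB'
            · exact Or.inl (Or.inl (mem_inter.mpr ⟨mem_union_left _ hzX, hA'⟩))
            · exact Or.inl (Or.inr (mem_filter.mpr ⟨hB', hzX, hsY⟩))
          · rcases h2 hzY with hA' | hB'
            · exact Or.inl (Or.inl (mem_inter.mpr ⟨mem_union_right _ hzY, hA'⟩))
            · refine Or.inr ((mem_image_star' hinv).mpr (mem_filter.mpr ⟨hB', ?_, hsX⟩))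
              rw [hinv]; exact hzY
        · rintro ((h | h) | h)
          · obtain ⟨hXY, hA'⟩ := mem_inter.mp h
            rcases mem_union.mp hXY with h' | h'
            · exact Or.inl ⟨h', h4 hA'⟩
            · exact Or.inr ⟨h', h3 hA'⟩
          · obtain ⟨hB', hX', hY'⟩ := mem_filter.mp h
            exact Or.inl ⟨hX', hY'⟩
          · obtain ⟨hB', hY', hX'⟩ := mem_filter.mp ((mem_image_star' hinv).mp h)
            rw [hinv] at hY'
            exact Or.inr ⟨hY', hX'⟩
    · rintro ⟨P, C, D, hmem, rfl⟩
      obtain ⟨hP, hC, hD, hCD⟩ := (hmemDom P C D).mp hmem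
      refine ⟨P ∪ C, P ∪ D.image star,
        ⟨union_subset_union hP hC, union_subset_union hP (Finset.image_subset_image hD)⟩, ?_⟩
      have h1 : ∀ x ∈ P ∪ C, star x ∉ P ∪ D.image star := by
        intro x hx
        rcases mem_union.mp hx with h | h
        · simp only [mem_union, not_or]
          exact ⟨fun h' => (hAs x (hP h)).1 (hP h'),
            fun h' => (hAs x (hP h)).2.2 (Finset.image_subset_image hD h')⟩
        · simp only [mem_union, not_or]
          refine ⟨fun h' => hBA x (hC h) (hP h'), fun h' => ?_⟩
          have : star (star x) ∈ D := (mem_image_star' hinv).mp h'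
          rw [hinv] at this
          exact Finset.disjoint_left.mp hCD h this
      have h2 : ∀ y ∈ P ∪ D.image star, star y ∉ P ∪ C := by
        intro y hy
        rcases mem_union.mp hy with h | h
        · simp only [mem_union, not_or]
          exact ⟨fun h' => (hAs y (hP h)).1 (hP h'),
            fun h' => (hAs y (hP h)).2.1 (hC h')⟩
        · have hyD : star y ∈ D := (mem_image_star' hinv).mp h
          simp only [mem_union, not_or]
          exact ⟨fun h' => Finset.disjoint_left.mp hdisj (hP h') (hD hyD),
            fun h' => Finset.disjoint_left.mp hCD h' hyD⟩
      rw [fusion_eq_union h1 h2]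
      simp only [hfdef]
      ext z
      simp only [mem_union]
      tauto
  have hinj : Set.InjOn f Dom := by
    rintro ⟨P, C, D⟩ hp ⟨P', C', D'⟩ hp' hEq
    obtain ⟨hP, hC, hD, hCD⟩ := (hmemDom P C D).mp hp
    obtain ⟨hP', hC', hD', hCD'⟩ := (hmemDom P' C' D').mp hp'
    simp only [hfdef] at hEq
    obtain ⟨e1, e2, e3⟩ := recover P C D hP hC hD
    obtain ⟨e1', e2', e3'⟩ := recover P' C' D' hP' hC' hD'
    have hPP : P = P' := by rw [← e1, ← e1', hEq]
    have hCC : C = C' := by rw [← e2, ← e2', hEq]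
    have hDD : D = D' := by
      have : D.image star = D'.image star := by rw [← e3, ← e3', hEq]
      exact Finset.image_injective hinv.injective this
    simp [hPP, hCC, hDD]
  rw [key, Finset.card_image_of_injOn hinj, hDomdef, Finset.card_product,
    Finset.card_powerset, card_disjoint_pairs]
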